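/- arXiv:1901.11272 — 3 statements merged into one kernel-verified Lean document; each statement's English description precedes it below -/
import Mathlib

section
/- Let B ∈ ℝ^{r×n}. Then the generalized monomial map μ_B : ℝⁿ_{>0} → ℝʳ_{>0}, x ↦ x^B, is q(B)-affine; consequently every map in m(B) is q(B)-affine. -/
/-- The positive orthant `ℝⁿ_{>0}`. -/
def posOrth (n : ℕ) : Set (Fin n → ℝ) := {x | ∀ i, 0 < x i}

/-- The generalized monomial map `μ_B : x ↦ x^B`, `(x^B)_j = ∏ᵢ xᵢ^{B j i}`. -/
noncomputable def monMap {n r : ℕ} (B : Matrix (Fin r) (Fin n) ℝ) (x : Fin n → ℝ) :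
    Fin r → ℝ :=
  fun j => ∏ i, x i ^ B j i

/-- `m(B) = {x ↦ κ ∗ x^B : κ ∈ ℝʳ_{>0}}`. -/
noncomputable def mSet {n r : ℕ} (B : Matrix (Fin r) (Fin n) ℝ) :
    Set ((Fin n → ℝ) → (Fin r → ℝ)) :=
  {G | ∃ κ : Fin r → ℝ, (∀ j, 0 < κ j) ∧ G = fun x => fun j => κ j * monMap B x j}

/-- `q(B) = {diag(κ) B diag(λ) : κ ∈ ℝʳ_{>0}, λ ∈ ℝⁿ_{>0}}`. -/
def qSet {n r : ℕ} (B : Matrix (Fin r) (Fin n) ℝ) : Set (Matrix (Fin r) (Fin n) ℝ) :=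
  {M | ∃ κ : Fin r → ℝ, ∃ lam : Fin n → ℝ, (∀ j, 0 < κ j) ∧ (∀ i, 0 < lam i) ∧
    M = Matrix.diagonal κ * B * Matrix.diagonal lam}

/-- `G : X → ℝʳ` is `ℬ`-affine on `X`. -/
def IsAffine {n r : ℕ} (X : Set (Fin n → ℝ)) (ℬ : Set (Matrix (Fin r) (Fin n) ℝ))
    (G : (Fin n → ℝ) → (Fin r → ℝ)) : Prop :=
  ∀ x ∈ X, ∀ y ∈ X, ∃ M ∈ ℬ, G x - G y = M.mulVec (x - y)

/-- The generalized monomial map `μ_B` is `q(B)`-affine on the positive orthant;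
consequently every map in `m(B)` is `q(B)`-affine. -/
theorem stmt11 {n r : ℕ} (B : Matrix (Fin r) (Fin n) ℝ) :
    IsAffine (posOrth n) (qSet B) (monMap B) ∧
    ∀ G ∈ mSet B, IsAffine (posOrth n) (qSet B) G := by
  have key : IsAffine (posOrth n) (qSet B) (monMap B) := by
    intro x hx y hy
    set lam : Fin n → ℝ := fun i =>
      if x i = y i then 1 / x i
      else (Real.log (x i) - Real.log (y i)) / (x i - y i) with hlamdef
    have hlam_pos : ∀ i, 0 < lam i := by
      intro i
      by_cases h : x i = y i
      · simpa [hlamdef, h] using one_div_pos.mpr (hy i)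
      · simp only [hlamdef, h, if_false]
        rcases lt_or_gt_of_ne h with hlt | hgt
        · have hlog : Real.log (x i) < Real.log (y i) := Real.log_lt_log (hx i) hlt
          exact div_pos_of_neg_of_neg (by linarith) (by linarith)
        · have hlog : Real.log (y i) < Real.log (x i) := Real.log_lt_log (hy i) hgt
          exact div_pos (by linarith) (by linarith)
    have hlam_eq : ∀ i, lam i * (x i - y i) = Real.log (x i) - Real.log (y i) := by
      intro i
      by_cases h : x i = y i
      · simp [hlamdef, h]
      · simp only [hlamdef, h, if_false]
        exact div_mul_cancel₀ _ (sub_ne_zero.mpr h)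
    set S : Fin r → ℝ := fun j => ∑ i, B j i * (Real.log (x i) - Real.log (y i)) with hSdef
    set A : Fin r → ℝ := fun j => ∑ i, B j i * Real.log (y i) with hAdef
    have hmx : ∀ j, monMap B x j = Real.exp (A j + S j) := by
      intro j
      have : A j + S j = ∑ i, Real.log (x i) * B j i := by
        rw [hAdef, hSdef, ← Finset.sum_add_distrib]
        apply Finset.sum_congr rfl
        intro i _; ring
      rw [this, Real.exp_sum, monMap]
      exact Finset.prod_congr rfl fun i _ => Real.rpow_def_of_pos (hx i) _
    have hmy : ∀ j, monMap B y j = Real.exp (A j) := by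
      intro j
      have : A j = ∑ i, Real.log (y i) * B j i := by
        rw [hAdef]; exact Finset.sum_congr rfl fun i _ => by ring
      rw [this, Real.exp_sum, monMap]
      exact Finset.prod_congr rfl fun i _ => Real.rpow_def_of_pos (hy i) _
    set κ : Fin r → ℝ := fun j =>
      if S j = 0 then Real.exp (A j)
      else (Real.exp (A j + S j) - Real.exp (A j)) / S j with hκdef
    have hκpos : ∀ j, 0 < κ j := by
      intro j
      by_cases h : S j = 0
      · simpa [hκdef, h] using Real.exp_pos (A j)
      · simp only [hκdef, h, if_false]
        rcases lt_or_gt_of_ne h with hlt | hgt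
        · have : Real.exp (A j + S j) < Real.exp (A j) := Real.exp_lt_exp.mpr (by linarith)
          exact div_pos_of_neg_of_neg (by linarith) hlt
        · have : Real.exp (A j) < Real.exp (A j + S j) := Real.exp_lt_exp.mpr (by linarith)
          exact div_pos (by linarith) hgt
    have hκS : ∀ j, κ j * S j = Real.exp (A j + S j) - Real.exp (A j) := by
      intro j
      by_cases h : S j = 0
      · simp [hκdef, h]
      · simp only [hκdef, h, if_false]
        field_simp
    refine ⟨Matrix.diagonal κ * B * Matrix.diagonal lam, ⟨κ, lam, hκpos, hlam_pos, rfl⟩, ?_⟩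
    funext j
    have hentry : ∀ i, (Matrix.diagonal κ * B * Matrix.diagonal lam) j i = κ j * B j i * lam i := by
      intro i
      rw [Matrix.mul_diagonal, Matrix.diagonal_mul]
    have : (Matrix.diagonal κ * B * Matrix.diagonal lam).mulVec (x - y) j
        = ∑ i, κ j * (B j i * (lam i * (x i - y i))) := by
      simp only [Matrix.mulVec, dotProduct]
      exact Finset.sum_congr rfl fun i _ => by rw [hentry]; simp [Pi.sub_apply]; ring
    rw [Pi.sub_apply, this]
    have : ∑ i, κ j * (B j i * (lam i * (x i - y i))) = κ j * S j := by
      rw [← Finset.mul_sum, hSdef]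
      congr 1
      exact Finset.sum_congr rfl fun i _ => by rw [hlam_eq]
    rw [this, hκS, hmx, hmy]
  refine ⟨key, ?_⟩
  rintro G ⟨κ₀, hκ₀, rfl⟩ x hx y hy
  obtain ⟨M, ⟨κ, lam, hκ, hlam, rfl⟩, hM⟩ := key x hx y hy
  refine ⟨Matrix.diagonal (fun j => κ₀ j * κ j) * B * Matrix.diagonal lam,
    ⟨_, lam, fun j => mul_pos (hκ₀ j) (hκ j), hlam, rfl⟩, ?_⟩
  funext j
  have h1 : (Matrix.diagonal κ * B * Matrix.diagonal lam).mulVec (x - y) j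
      = (monMap B x - monMap B y) j := by rw [hM]
  have h2 : ∀ (c : Fin r → ℝ), (Matrix.diagonal c * B * Matrix.diagonal lam).mulVec (x - y) j
      = c j * ∑ i, B j i * lam i * (x - y) i := by
    intro c
    simp only [Matrix.mulVec, dotProduct, Matrix.mul_diagonal, Matrix.diagonal_mul]
    rw [Finset.mul_sum]
    exact Finset.sum_congr rfl fun i _ => by ring
  rw [h2]
  have := h1
  rw [h2] at this
  rw [mul_assoc, this]
  simp [Pi.sub_apply]
  ring
end

section
/- Let B ∈ ℝ^{r×n} and let S ⊆ ℝⁿ be a linear subspace. Then Δ_S m(B) = q(B)(S \ {0}), i.e. the set of differences {κ ∗ x^B − κ ∗ y^B : κ ∈ ℝʳ_{>0}, x, y ∈ ℝⁿ_{>0}, x − y ∈ S \ {0}} equals {M z : M ∈ q(B), z ∈ S \ {0}}. -/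
/-- `Δ_S 𝒢` for maps on the positive orthant. -/
def DeltaS {n r : ℕ} (X : Set (Fin n → ℝ)) (S : Submodule ℝ (Fin n → ℝ))
    (𝒢 : Set ((Fin n → ℝ) → (Fin r → ℝ))) : Set (Fin r → ℝ) :=
  {w | ∃ G ∈ 𝒢, ∃ x ∈ X, ∃ y ∈ X, x - y ∈ S ∧ x - y ≠ 0 ∧ w = G x - G y}

/-- `ℬ(T) = {M z : M ∈ ℬ, z ∈ T}`. -/
def matImage {n r : ℕ} (ℬ : Set (Matrix (Fin r) (Fin n) ℝ)) (T : Set (Fin n → ℝ)) :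
    Set (Fin r → ℝ) :=
  {w | ∃ M ∈ ℬ, ∃ z ∈ T, w = M.mulVec z}

/-!
Both sides are described coordinatewise by positive secant slopes. On the positive orthant
`(x^B)_j = exp ((B log x)_j)`, and secant slopes of the strictly increasing functions `exp`
and `log` are positive, so
`κ_j ((x^B)_j - (y^B)_j) = κ_j σ_j (B (τ ∗ (x - y)))_j` with positive slopes `σ_j`, `τ_i`,
which is `diag(κ ∗ σ) B diag(τ) (x - y)`. Conversely, every positive `λ_i` is the slope of
`log` between two positive points at any prescribed difference `z_i`, and then the factor
`σ_j` is absorbed into `κ_j`.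
-/

open Matrix Real

lemma StrictMonoOn.exists_pos_sub_eq_mul {𝕜 : Type*} [Field 𝕜] [LinearOrder 𝕜]
    [IsStrictOrderedRing 𝕜] {f : 𝕜 → 𝕜} {s : Set 𝕜} (hf : StrictMonoOn f s) {a b : 𝕜}
    (ha : a ∈ s) (hb : b ∈ s) : ∃ c > 0, f a - f b = c * (a - b) := by
  rcases eq_or_ne a b with rfl | hab
  · exact ⟨1, one_pos, by simp⟩
  · refine ⟨slope f b a, hf.slope_pos hb ha hab.symm, ?_⟩
    rw [slope_def_field]
    field_simp [sub_ne_zero.mpr hab]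

lemma Real.exists_pos_exp_sub_exp (a b : ℝ) : ∃ c > 0, exp a - exp b = c * (a - b) :=
  exp_strictMono.strictMonoOn Set.univ |>.exists_pos_sub_eq_mul trivial trivial

lemma Real.exists_pos_log_sub_log {x y : ℝ} (hx : 0 < x) (hy : 0 < y) :
    ∃ c > 0, log x - log y = c * (x - y) :=
  strictMonoOn_log.exists_pos_sub_eq_mul hx hy

lemma Real.exists_log_sub_log_eq_mul (d : ℝ) {l : ℝ} (hl : 0 < l) :
    ∃ x y : ℝ, 0 < x ∧ 0 < y ∧ x - y = d ∧ log x - log y = l * d := by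
  -- `exp (l d) - 1 = c l d`, so `y := 1 / (c l)` and `x := y exp (l d)` differ by `d`.
  obtain ⟨c, hc, hexp⟩ := exists_pos_exp_sub_exp (l * d) 0
  have hy : 0 < 1 / (c * l) := by positivity
  refine ⟨1 / (c * l) * exp (l * d), 1 / (c * l), by positivity, hy, ?_, ?_⟩
  · rw [exp_zero] at hexp
    field_simp
    linear_combination hexp
  · rw [log_mul hy.ne' (exp_pos _).ne', log_exp]
    ring

lemma monMap_eq_exp_mulVec_log {n r : ℕ} (B : Matrix (Fin r) (Fin n) ℝ) {x : Fin n → ℝ}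
    (hx : x ∈ posOrth n) (j : Fin r) :
    monMap B x j = exp ((B *ᵥ fun i => log (x i)) j) := by
  rw [mulVec, dotProduct, exp_sum, monMap]
  refine Finset.prod_congr rfl fun i _ => ?_
  rw [rpow_def_of_pos (hx i), mul_comm]

lemma exists_pos_monMap_sub_monMap {n r : ℕ} (B : Matrix (Fin r) (Fin n) ℝ)
    {x y : Fin n → ℝ} (hx : x ∈ posOrth n) (hy : y ∈ posOrth n) (j : Fin r) :
    ∃ c > 0, monMap B x j - monMap B y j =
      c * (B *ᵥ fun i => log (x i) - log (y i)) j := by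
  obtain ⟨c, hc, h⟩ := exists_pos_exp_sub_exp ((B *ᵥ fun i => log (x i)) j)
    ((B *ᵥ fun i => log (y i)) j)
  refine ⟨c, hc, ?_⟩
  rw [monMap_eq_exp_mulVec_log B hx, monMap_eq_exp_mulVec_log B hy, h, ← Pi.sub_apply,
    ← mulVec_sub]
  rfl

lemma diagonal_mul_mul_diagonal_mulVec {m n R : Type*} [Fintype m] [Fintype n]
    [DecidableEq m] [DecidableEq n] [CommSemiring R] (κ : m → R) (A : Matrix m n R)
    (lam z : n → R) (j : m) :
    ((diagonal κ * A * diagonal lam) *ᵥ z) j = κ j * (A *ᵥ (lam * z)) j := by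
  rw [← mulVec_mulVec, ← mulVec_mulVec, mulVec_diagonal]
  congr 2
  ext i
  exact mulVec_diagonal lam z i

lemma exists_qSet_mulVec_eq_sub {n r : ℕ} (B : Matrix (Fin r) (Fin n) ℝ)
    {G : (Fin n → ℝ) → Fin r → ℝ} (hG : G ∈ mSet B) {x y : Fin n → ℝ}
    (hx : x ∈ posOrth n) (hy : y ∈ posOrth n) :
    ∃ M ∈ qSet B, G x - G y = M *ᵥ (x - y) := by
  obtain ⟨κ, hκ, rfl⟩ := hG
  choose τ hτ hlog using fun i => exists_pos_log_sub_log (hx i) (hy i)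
  choose σ hσ hmon using exists_pos_monMap_sub_monMap B hx hy
  refine ⟨diagonal (κ * σ) * B * diagonal τ,
    ⟨κ * σ, τ, fun j => mul_pos (hκ j) (hσ j), hτ, rfl⟩, funext fun j => ?_⟩
  rw [diagonal_mul_mul_diagonal_mulVec, Pi.sub_apply, ← mul_sub, hmon]
  simp only [hlog, Pi.mul_apply, mul_assoc]
  rfl

lemma exists_mSet_sub_eq_qSet_mulVec {n r : ℕ} (B : Matrix (Fin r) (Fin n) ℝ)
    {M : Matrix (Fin r) (Fin n) ℝ} (hM : M ∈ qSet B) (z : Fin n → ℝ) :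
    ∃ G ∈ mSet B, ∃ x ∈ posOrth n, ∃ y ∈ posOrth n, x - y = z ∧ M *ᵥ z = G x - G y := by
  obtain ⟨κ, lam, hκ, hlam, rfl⟩ := hM
  choose x y hx hy hxy hlog using fun i => exists_log_sub_log_eq_mul (z i) (hlam i)
  choose σ hσ hmon using exists_pos_monMap_sub_monMap B hx hy
  refine ⟨fun x j => κ j / σ j * monMap B x j, ⟨κ / σ, fun j => div_pos (hκ j) (hσ j), rfl⟩,
    x, hx, y, hy, funext hxy, funext fun j => ?_⟩
  simp only [diagonal_mul_mul_diagonal_mulVec, Pi.sub_apply, ← mul_sub, hmon, hlog]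
  field_simp [(hσ j).ne']
  rfl

/-- `Δ_S m(B) = q(B)(S \ {0})`. -/
theorem stmt12 {n r : ℕ} (B : Matrix (Fin r) (Fin n) ℝ) (S : Submodule ℝ (Fin n → ℝ)) :
    DeltaS (posOrth n) S (mSet B) = matImage (qSet B) ((S : Set (Fin n → ℝ)) \ {0}) := by
  ext w
  constructor
  · rintro ⟨G, hG, x, hx, y, hy, hS, hne, rfl⟩
    obtain ⟨M, hM, h⟩ := exists_qSet_mulVec_eq_sub B hG hx hy
    exact ⟨M, hM, x - y, ⟨hS, hne⟩, h⟩
  · rintro ⟨M, hM, z, ⟨hzS, hz0⟩, rfl⟩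
    obtain ⟨G, hG, x, hx, y, hy, rfl, h⟩ := exists_mSet_sub_eq_qSet_mulVec B hM z
    exact ⟨G, hG, x, hx, y, hy, hzS, hz0, h⟩
end

section
/- Let B ∈ ℝ^{r×n}, A ∈ ℝ^{m×r}, and let S ⊆ ℝⁿ be a linear subspace. Then the set of generalized polynomial maps A ∘ m(B) = {x ↦ A(κ ∗ x^B) : κ ∈ ℝʳ_{>0}} on ℝⁿ_{>0} is injective with respect to S if and only if ker(A) ∩ q(B)(S \ {0}) = ∅. -/
/-- `𝒢` is injective with respect to `S`. -/
def InjOnCosets {n r : ℕ} (X : Set (Fin n → ℝ)) (S : Submodule ℝ (Fin n → ℝ))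
    (𝒢 : Set ((Fin n → ℝ) → (Fin r → ℝ))) : Prop :=
  ∀ G ∈ 𝒢, ∀ x₀ ∈ X, Set.InjOn G ({z | z - x₀ ∈ S} ∩ X)

/-- `A ∘ 𝒢 = {A ∘ G : G ∈ 𝒢}` for a single matrix `A`. -/
def compMat {n r m : ℕ} (A : Matrix (Fin m) (Fin r) ℝ)
    (𝒢 : Set ((Fin n → ℝ) → (Fin r → ℝ))) : Set ((Fin n → ℝ) → (Fin m → ℝ)) :=
  {H | ∃ G ∈ 𝒢, H = fun x => A.mulVec (G x)}


noncomputable def phiFn (t : ℝ) : ℝ := if t = 0 then 1 else (Real.exp t - 1) / t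

lemma phiFn_pos (t : ℝ) : 0 < phiFn t := by
  unfold phiFn
  rcases lt_trichotomy t 0 with h | h | h
  · rw [if_neg h.ne]
    apply div_pos_of_neg_of_neg _ h
    simpa using Real.exp_lt_one_iff.mpr h
  · simp [h]
  · rw [if_neg h.ne']
    apply div_pos _ h
    simpa using Real.one_lt_exp_iff.mpr h
    
lemma exp_sub_one_eq (t : ℝ) : Real.exp t - 1 = t * phiFn t := by
  unfold phiFn
  rcases eq_or_ne t 0 with h | h
  · simp [h]
  · rw [if_neg h]; field_simp


lemma monMap_eq_exp {n r : ℕ} (B : Matrix (Fin r) (Fin n) ℝ) {x : Fin n → ℝ}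
    (hx : ∀ i, 0 < x i) (j : Fin r) :
    monMap B x j = Real.exp (B.mulVec (fun i => Real.log (x i)) j) := by
  unfold monMap
  rw [show B.mulVec (fun i => Real.log (x i)) j = ∑ i, B j i * Real.log (x i) from rfl,
    Real.exp_sum]
  refine Finset.prod_congr rfl fun i _ => ?_
  rw [Real.rpow_def_of_pos (hx i), mul_comm]

lemma key_id {n r : ℕ} (B : Matrix (Fin r) (Fin n) ℝ) {x y : Fin n → ℝ}
    (hx : ∀ i, 0 < x i) (hy : ∀ i, 0 < y i) (j : Fin r) :
    monMap B x j - monMap B y j =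
      Real.exp (B.mulVec (fun i => Real.log (y i)) j) *
        phiFn (B.mulVec (fun i => Real.log (x i) - Real.log (y i)) j) *
        B.mulVec (fun i => Real.log (x i) - Real.log (y i)) j := by
  rw [monMap_eq_exp B hx j, monMap_eq_exp B hy j]
  have hsub : B.mulVec (fun i => Real.log (x i) - Real.log (y i)) j =
      B.mulVec (fun i => Real.log (x i)) j - B.mulVec (fun i => Real.log (y i)) j := by
    simp [Matrix.mulVec, dotProduct, mul_sub, Finset.sum_sub_distrib]
  set a := B.mulVec (fun i => Real.log (x i)) j
  set b := B.mulVec (fun i => Real.log (y i)) j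
  rw [hsub]
  have h1 : Real.exp (a - b) - 1 = (a - b) * phiFn (a - b) := exp_sub_one_eq _
  have h2 : Real.exp a = Real.exp b * Real.exp (a - b) := by
    rw [← Real.exp_add]; ring_nf
  rw [h2, show Real.exp b * Real.exp (a - b) - Real.exp b = Real.exp b * (Real.exp (a-b) - 1) by ring, h1]; ring

lemma qMulVec {n r : ℕ} (B : Matrix (Fin r) (Fin n) ℝ) (κ : Fin r → ℝ) (lam : Fin n → ℝ)
    (z : Fin n → ℝ) (j : Fin r) :
    (Matrix.diagonal κ * B * Matrix.diagonal lam).mulVec z j =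
      κ j * B.mulVec (fun i => lam i * z i) j := by
  rw [← Matrix.mulVec_mulVec, ← Matrix.mulVec_mulVec]
  rw [show (Matrix.diagonal lam).mulVec z = fun i => lam i * z i by
    funext i; simp [Matrix.mulVec_diagonal]]
  simp [Matrix.mulVec_diagonal]

lemma construct_pt (l z : ℝ) (hl : 0 < l) :
    0 < 1 / (l * phiFn (l * z)) ∧ 0 < 1 / (l * phiFn (l * z)) + z ∧
      Real.log (1 / (l * phiFn (l * z)) + z) - Real.log (1 / (l * phiFn (l * z))) = l * z := by
  set t := l * z with ht
  have hφ := phiFn_pos t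
  have hy : 0 < 1 / (l * phiFn t) := by positivity
  have hkey : 1 / (l * phiFn t) + z = Real.exp t * (1 / (l * phiFn t)) := by
    have h1 : t * phiFn t = Real.exp t - 1 := (exp_sub_one_eq t).symm
    field_simp
    nlinarith [h1]
  refine ⟨hy, ?_, ?_⟩
  · rw [hkey]; positivity
  · rw [hkey, Real.log_mul (Real.exp_ne_zero t) hy.ne', Real.log_exp]; ring

lemma slope_pos {x y : ℝ} (hx : 0 < x) (hy : 0 < y) (hne : x ≠ y) :
    0 < (Real.log x - Real.log y) / (x - y) := by
  rcases lt_or_gt_of_ne hne with h | h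
  · apply div_pos_of_neg_of_neg _ (by linarith)
    have := Real.log_lt_log hx h; linarith
  · apply div_pos _ (by linarith)
    have := Real.log_lt_log hy h; linarith

/-- The set of generalized polynomial maps `A ∘ m(B)` on `ℝⁿ_{>0}` is injective w.r.t. `S`
iff `ker(A) ∩ q(B)(S \ {0}) = ∅`. -/
theorem stmt14 {n r m : ℕ} (B : Matrix (Fin r) (Fin n) ℝ) (A : Matrix (Fin m) (Fin r) ℝ)
    (S : Submodule ℝ (Fin n → ℝ)) :
    InjOnCosets (posOrth n) S (compMat A (mSet B)) ↔
      {w : Fin r → ℝ | A.mulVec w = 0} ∩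
        matImage (qSet B) ((S : Set (Fin n → ℝ)) \ {0}) = ∅ := by
  constructor
  · -- injective ⇒ empty intersection
    intro hinj
    rw [Set.eq_empty_iff_forall_notMem]
    rintro w ⟨hw0, M, ⟨κ, lam, hκ, hlam, rfl⟩, z, ⟨hzS, hz0⟩, rfl⟩
    have hz0' : z ≠ 0 := by simpa using hz0
    set y : Fin n → ℝ := fun i => 1 / (lam i * phiFn (lam i * z i)) with hy_def
    set x : Fin n → ℝ := fun i => y i + z i with hx_def
    have hy : ∀ i, 0 < y i := fun i => (construct_pt (lam i) (z i) (hlam i)).1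
    have hx : ∀ i, 0 < x i := fun i => (construct_pt (lam i) (z i) (hlam i)).2.1
    have hlog : ∀ i, Real.log (x i) - Real.log (y i) = lam i * z i :=
      fun i => (construct_pt (lam i) (z i) (hlam i)).2.2
    have hu : (fun i => Real.log (x i) - Real.log (y i)) = fun i => lam i * z i :=
      funext hlog
    set κ' : Fin r → ℝ := fun j => κ j /
      (Real.exp (B.mulVec (fun i => Real.log (y i)) j) *
        phiFn (B.mulVec (fun i => lam i * z i) j)) with hκ'_def
    have hκ' : ∀ j, 0 < κ' j := by
      intro j
      have h1 := Real.exp_pos (B.mulVec (fun i => Real.log (y i)) j)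
      have h2 := phiFn_pos (B.mulVec (fun i => lam i * z i) j)
      exact div_pos (hκ j) (by positivity)
    have hdiff : ∀ j, κ' j * (monMap B x j - monMap B y j) =
        (Matrix.diagonal κ * B * Matrix.diagonal lam).mulVec z j := by
      intro j
      rw [key_id B hx hy j, hu, qMulVec]
      have h1 := (Real.exp_pos (B.mulVec (fun i => Real.log (y i)) j)).ne'
      have h2 := (phiFn_pos (B.mulVec (fun i => lam i * z i) j)).ne'
      rw [hκ'_def]
      field_simp
    have hH : (fun v => A.mulVec (fun j => κ' j * monMap B v j)) ∈ compMat A (mSet B) :=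
      ⟨fun v j => κ' j * monMap B v j, ⟨κ', hκ', rfl⟩, rfl⟩
    have hxy : x - y = z := by funext i; simp [hx_def]
    have hxmem : x ∈ {v | v - y ∈ S} ∩ posOrth n := ⟨by rw [Set.mem_setOf_eq, hxy]; exact hzS, hx⟩
    have hymem : y ∈ {v | v - y ∈ S} ∩ posOrth n := ⟨by simp, hy⟩
    have hGeq : (fun j => κ' j * monMap B x j) - (fun j => κ' j * monMap B y j) =
        (Matrix.diagonal κ * B * Matrix.diagonal lam).mulVec z := by
      funext j
      rw [Pi.sub_apply, ← mul_sub]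
      exact hdiff j
    have hHeq : A.mulVec (fun j => κ' j * monMap B x j) =
        A.mulVec (fun j => κ' j * monMap B y j) := by
      have := Matrix.mulVec_sub A (fun j => κ' j * monMap B x j) (fun j => κ' j * monMap B y j)
      rw [hGeq, hw0] at this
      exact sub_eq_zero.mp this.symm
    have := hinj _ hH y hy hxmem hymem hHeq
    rw [← hxy, this] at hz0'
    simp at hz0'
  · -- empty intersection ⇒ injective
    intro hemp H hH x₀ hx₀ p hp q hq hpq
    obtain ⟨G, ⟨κ, hκ, rfl⟩, rfl⟩ := hH
    obtain ⟨hpS, hppos⟩ := hp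
    obtain ⟨hqS, hqpos⟩ := hq
    by_contra hne
    have hzS : p - q ∈ S := by
      have := S.sub_mem hpS hqS
      rwa [sub_sub_sub_cancel_right] at this
    have hz0 : p - q ≠ 0 := sub_ne_zero.mpr hne
    set lam : Fin n → ℝ := fun i =>
      if p i = q i then 1 else (Real.log (p i) - Real.log (q i)) / (p i - q i) with hlam_def
    have hlam : ∀ i, 0 < lam i := by
      intro i
      rw [hlam_def]
      by_cases h : p i = q i
      · simp [h]
      · simpa [h] using slope_pos (hppos i) (hqpos i) h
    have hu : (fun i => lam i * (p - q) i) = fun i => Real.log (p i) - Real.log (q i) := by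
      funext i
      by_cases h : p i = q i
      · simp [hlam_def, h]
      · have hli : lam i = (Real.log (p i) - Real.log (q i)) / (p i - q i) := by
          simp [hlam_def, h]
        rw [Pi.sub_apply, hli, div_mul_cancel₀ _ (sub_ne_zero.mpr h)]
    set κ'' : Fin r → ℝ := fun j => κ j *
      (Real.exp (B.mulVec (fun i => Real.log (q i)) j) *
        phiFn (B.mulVec (fun i => Real.log (p i) - Real.log (q i)) j)) with hκ''_def
    have hκ'' : ∀ j, 0 < κ'' j := by
      intro j
      have h1 := Real.exp_pos (B.mulVec (fun i => Real.log (q i)) j)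
      have h2 := phiFn_pos (B.mulVec (fun i => Real.log (p i) - Real.log (q i)) j)
      exact mul_pos (hκ j) (by positivity)
    have hw : (Matrix.diagonal κ'' * B * Matrix.diagonal lam).mulVec (p - q) =
        (fun j => κ j * monMap B p j) - fun j => κ j * monMap B q j := by
      funext j
      rw [qMulVec, hu, Pi.sub_apply, ← mul_sub, key_id B hppos hqpos j, hκ''_def]
      ring
    have hA0 : A.mulVec ((Matrix.diagonal κ'' * B * Matrix.diagonal lam).mulVec (p - q)) = 0 := by
      beta_reduce at hpq
      rw [hw, Matrix.mulVec_sub, hpq, sub_self]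
    exact Set.eq_empty_iff_forall_notMem.mp hemp _
      ⟨hA0, Matrix.diagonal κ'' * B * Matrix.diagonal lam, ⟨κ'', lam, hκ'', hlam, rfl⟩,
        p - q, ⟨hzS, by simpa using hz0⟩, rfl⟩
end
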